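/- Let I be the operad identity and define \lambda(h) = I\centerdot h and \rho(h) = h\centerdot I from G^{inv} to G. Then for all h, h' \in G^{inv}: \lambda(h)\times\lambda(h') = \lambda(h' \centerdot (h \curvearrowleft \lambda(h'))), \rho(h)\times\rho(h') = \rho((h\curvearrowleft\rho(h'))\centerdot h'), and \rho(h) = h\centerdot\lambda(h)\centerdot h^{-1}. Moreover \rho(h)\times\lambda(h') = (h')^{-1}\curvearrowright\rho(h'\centerdot(h\curvearrowleft\lambda(h'))) and \lambda(h)\times\rho(h') = h'\curvearrowright\lambda((h\curvearrowleft\rho(h'))\centerdot h'). -/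

import Mathlib

/-- Transport along an equality of indices. -/
def castP {P : ℕ → Type} {a b : ℕ} (h : a = b) (p : P a) : P b := h ▸ p

/-- The data of a total operadic composition on the collection `P`:
`γ(p; q₁,…,q_k) ∈ P(n₁+⋯+n_k)` for `p ∈ P(k)`, `qᵢ ∈ P(nᵢ)`. -/
abbrev OpGamma (P : ℕ → Type) :=
  ∀ {k : ℕ} (ns : Fin k → ℕ), P k → (∀ i, P (ns i)) → P (∑ i, ns i)

/-- The canonical order-preserving identification `(i, j) ↦ n₁ + ⋯ + n_{i-1} + j` of
`Σ i, Fin (ns i)` with `Fin (∑ i, ns i)`. -/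
def finSigmaMk {k : ℕ} (ns : Fin k → ℕ) (i : Fin k) (j : Fin (ns i)) : Fin (∑ l, ns l) :=
  ⟨(∑ l ∈ Finset.univ.filter (fun l => l < i), ns l) + j.1, by
    have h1 := Finset.sum_filter_add_sum_filter_not (Finset.univ : Finset (Fin k))
      (fun l => l < i) ns
    have h2 : ns i ≤ ∑ l ∈ Finset.univ.filter (fun l => ¬ l < i), ns l :=
      Finset.single_le_sum (f := ns) (fun _ _ => Nat.zero_le _) (by simp)
    have h3 := j.2
    omega⟩

/-- The pair `(a, b)` as a function on `Fin 2`. -/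
def pairFun (a b : ℕ) : Fin 2 → ℕ := fun i => if i.1 = 0 then a else b

/-- A pair of operators as inputs for an arity-2 operator. -/
def pairP {P : ℕ → Type} {a b : ℕ} (p : P a) (q : P b) : ∀ i : Fin 2, P (pairFun a b i) :=
  fun i =>
    if h : i.1 = 0 then castP (by simp [pairFun, h]) p else castP (by simp [pairFun, h]) q

/-- `(P, γ, id, m)` is an operad with multiplication: `γ` is associative, unital,
multilinear, `P(1) = ℂ·id`, and the distinguished arity-2 element `m` satisfies
`m ∘₁ m = m ∘₂ m`. -/
structure IsOperadMul {P : ℕ → Type} [∀ n, AddCommGroup (P n)] [∀ n, Module ℂ (P n)]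
    (gamma : OpGamma P) (idP : P 1) (m : P 2) : Prop where
  assoc : ∀ {k : ℕ} (ns : Fin k → ℕ) (p : P k) (qs : ∀ i, P (ns i))
      (ms : Fin (∑ i, ns i) → ℕ) (rs : ∀ l, P (ms l)),
      HEq (gamma ms (gamma ns p qs) rs)
        (gamma (fun i => ∑ j : Fin (ns i), ms (finSigmaMk ns i j)) p
          (fun i => gamma (fun j => ms (finSigmaMk ns i j)) (qs i)
            (fun j => rs (finSigmaMk ns i j))))
  unit_left : ∀ (n : ℕ) (q : P n), HEq (gamma (fun _ : Fin 1 => n) idP (fun _ => q)) q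
  unit_right : ∀ (k : ℕ) (p : P k), HEq (gamma (fun _ : Fin k => 1) p (fun _ => idP)) p
  add_left : ∀ {k : ℕ} (ns : Fin k → ℕ) (p p' : P k) (qs : ∀ i, P (ns i)),
      gamma ns (p + p') qs = gamma ns p qs + gamma ns p' qs
  smul_left : ∀ {k : ℕ} (ns : Fin k → ℕ) (c : ℂ) (p : P k) (qs : ∀ i, P (ns i)),
      gamma ns (c • p) qs = c • gamma ns p qs
  add_right : ∀ {k : ℕ} (ns : Fin k → ℕ) (p : P k) (qs : ∀ i, P (ns i)) (i : Fin k)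
      (q q' : P (ns i)),
      gamma ns p (Function.update qs i (q + q')) =
        gamma ns p (Function.update qs i q) + gamma ns p (Function.update qs i q')
  smul_right : ∀ {k : ℕ} (ns : Fin k → ℕ) (p : P k) (qs : ∀ i, P (ns i)) (i : Fin k)
      (c : ℂ) (q : P (ns i)),
      gamma ns p (Function.update qs i (c • q)) = c • gamma ns p (Function.update qs i q)
  one_dim : ∀ p : P 1, ∃ c : ℂ, p = c • idP
  mul_op : HEq (gamma (pairFun 2 1) m (pairP m idP)) (gamma (pairFun 1 2) m (pairP idP m))

/-- Series of operators, `ℂ[[𝒫]] = ∏ₙ P(n)` (only components `n ≥ 1` are relevant). -/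
abbrev Ser (P : ℕ → Type) := ∀ n, P n

/-- The substitution product `(x × y)_N = ∑_{k, n₁+⋯+n_k = N} γ(x_k; y_{n₁},…,y_{n_k})`,
i.e. the sum over all compositions of `N`.  For `h ∈ G^{inv} = 1 + ℂ[[𝒫]]` and `g ∈ G`
this is also the right action `h ↶ g := h × g` (the constant term passing through). -/
def timesS {P : ℕ → Type} [∀ n, AddCommGroup (P n)] (gamma : OpGamma P)
    (x y : Ser P) : Ser P := fun N =>
  if hN : N = 0 then 0 else
    ∑ c : Composition N,
      castP c.sum_blocksFun
        (gamma c.blocksFun (x c.length) (fun i => y (c.blocksFun i)))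

/-- The concatenation product of (tails of) series induced by the multiplication `m`:
`(x ∙ y)_N = ∑_{k+q=N, k,q ≥ 1} γ(m; x_k, y_q)`. -/
def cdotSS {P : ℕ → Type} [∀ n, AddCommGroup (P n)] (gamma : OpGamma P) (m : P 2)
    (x y : Ser P) : Ser P := fun N =>
  ∑ k ∈ (Finset.Ioo 0 N).attach,
    castP (show ∑ i, pairFun k.1 (N - k.1) i = N by
        have h := Finset.mem_Ioo.mp k.2
        simp only [pairFun, Fin.sum_univ_two, Fin.val_zero, Fin.val_one]
        simp only [if_true, if_neg one_ne_zero, reduceIte]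
        omega)
      (gamma (pairFun k.1 (N - k.1)) m (pairP (x k.1) (y (N - k.1))))

/-- The product of the group `G^{inv}` of series with constant term `1`, on tails:
`(1+x)(1+y) = 1 + (x + y + x∙y)`. -/
def gmul {P : ℕ → Type} [∀ n, AddCommGroup (P n)] (gamma : OpGamma P) (m : P 2)
    (x y : Ser P) : Ser P :=
  x + y + cdotSS gamma m x y

/-- The operad identity `I` viewed as a series. -/
def Iser {P : ℕ → Type} [∀ n, AddCommGroup (P n)] (idP : P 1) : Ser P := fun n =>
  if h : n = 1 then castP h.symm idP else 0

/-- Conjugation `h ↷ g = h ∙ g ∙ h⁻¹` on tails: given `h = 1 + x` with inverse `1 + y`,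
`(1+x) ∙ g ∙ (1+y) = g + x∙g + g∙y + x∙g∙y`. -/
def conjS {P : ℕ → Type} [∀ n, AddCommGroup (P n)] (gamma : OpGamma P) (m : P 2)
    (x g y : Ser P) : Ser P :=
  g + cdotSS gamma m x g + cdotSS gamma m g y + cdotSS gamma m (cdotSS gamma m x g) y

/-- Left translation `λ(h) = I ∙ h` of `G^{inv}` into `G`, on tails. -/
def lamS {P : ℕ → Type} [∀ n, AddCommGroup (P n)] (gamma : OpGamma P) (idP : P 1)
    (m : P 2) (x : Ser P) : Ser P :=
  Iser idP + cdotSS gamma m (Iser idP) x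

/-- Right translation `ρ(h) = h ∙ I` of `G^{inv}` into `G`, on tails. -/
def rhoS {P : ℕ → Type} [∀ n, AddCommGroup (P n)] (gamma : OpGamma P) (idP : P 1)
    (m : P 2) (x : Ser P) : Ser P :=
  Iser idP + cdotSS gamma m x (Iser idP)


section Lemmas
set_option linter.unusedSectionVars false
set_option linter.unusedVariables false

variable {P : ℕ → Type} [∀ n, AddCommGroup (P n)] [∀ n, Module ℂ (P n)]

theorem castP_heq {a b : ℕ} (h : a = b) (p : P a) : HEq (castP (P := P) h p) p := by
  subst h; rfl

theorem castP_irrel_heq {a b a' b' : ℕ} (h : a = b) (h' : a' = b') {p : P a} {p' : P a'}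
    (hp : HEq p p') : HEq (castP (P := P) h p) (castP (P := P) h' p') := by
  subst h; subst h'; exact hp

theorem castP_eq_castP {s1 s2 N : ℕ} (h1 : s1 = N) (h2 : s2 = N) {u : P s1} {v : P s2}
    (h : HEq u v) : castP (P := P) h1 u = castP (P := P) h2 v := by
  subst h1; subst h2; cases h; rfl

theorem castP_castP {a b c : ℕ} (h1 : a = b) (h2 : b = c) (p : P a) :
    castP (P := P) h2 (castP h1 p) = castP (h1.trans h2) p := by
  subst h1; subst h2; rfl

theorem castP_add {a b : ℕ} (h : a = b) (p q : P a) :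
    castP (P := P) h (p + q) = castP h p + castP h q := by subst h; rfl

theorem castP_zero {a b : ℕ} (h : a = b) : castP (P := P) h (0 : P a) = 0 := by subst h; rfl

variable (gamma : OpGamma P) (idP : P 1) (m : P 2)

theorem gamma_congr {k k' : ℕ} (hk : k = k') {ns : Fin k → ℕ} {ns' : Fin k' → ℕ}
    (hns : ∀ i : Fin k, ns i = ns' (Fin.cast hk i))
    {p : P k} {p' : P k'} (hp : HEq p p')
    {qs : ∀ i, P (ns i)} {qs' : ∀ i, P (ns' i)}
    (hqs : ∀ i : Fin k, HEq (qs i) (qs' (Fin.cast hk i))) :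
    HEq (gamma ns p qs) (gamma ns' p' qs') := by
  subst hk
  have h1 : ns = ns' := funext fun i => hns i
  subst h1
  cases hp
  have h2 : qs = qs' := funext fun i => eq_of_heq (hqs i)
  subst h2
  rfl

theorem gamma_congr' {k : ℕ} {ns ns' : Fin k → ℕ} (hns : ∀ i, ns i = ns' i)
    {p : P k} {qs : ∀ i, P (ns i)} {qs' : ∀ i, P (ns' i)}
    (hqs : ∀ i, HEq (qs i) (qs' i)) :
    HEq (gamma ns p qs) (gamma ns' p qs') :=
  gamma_congr gamma rfl (fun i => hns i) HEq.rfl (fun i => hqs i)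

variable (H : IsOperadMul gamma idP m)
include H

theorem gamma_zero_left {k : ℕ} (ns : Fin k → ℕ) (qs : ∀ i, P (ns i)) :
    gamma ns (0 : P k) qs = 0 := by
  have h := H.smul_left ns (0 : ℂ) 0 qs
  simpa using h

theorem gamma_zero_input {k : ℕ} (ns : Fin k → ℕ) (p : P k) (qs : ∀ i, P (ns i))
    (i : Fin k) (h : qs i = 0) : gamma ns p qs = 0 := by
  have h1 : qs = Function.update qs i ((0 : ℂ) • qs i) := by
    funext j
    rcases eq_or_ne j i with rfl | hj
    · simp [h]
    · simp [Function.update_of_ne hj]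
  rw [h1, H.smul_right]
  simp

theorem gamma_add_input {k : ℕ} (ns : Fin k → ℕ) (p : P k) (qs qs' qs'' : ∀ i, P (ns i))
    (i : Fin k) (hoff : ∀ j, j ≠ i → qs j = qs' j ∧ qs j = qs'' j)
    (hi : qs i = qs' i + qs'' i) :
    gamma ns p qs = gamma ns p qs' + gamma ns p qs'' := by
  have e1 : qs = Function.update qs' i (qs' i + qs'' i) := by
    funext j
    rcases eq_or_ne j i with rfl | hj
    · simp [hi]
    · simp [Function.update_of_ne hj, (hoff j hj).1]
  have e2 : Function.update qs' i (qs' i) = qs' := Function.update_eq_self i qs'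
  have e3 : Function.update qs' i (qs'' i) = qs'' := by
    funext j
    rcases eq_or_ne j i with rfl | hj
    · simp
    · simp [Function.update_of_ne hj, ← (hoff j hj).1, (hoff j hj).2]
  rw [e1, H.add_right, e2, e3]

end Lemmas

section Mu
set_option linter.unusedSectionVars false
set_option maxHeartbeats 1000000

variable {P : ℕ → Type} [∀ n, AddCommGroup (P n)] [∀ n, Module ℂ (P n)]

theorem pairFun_sum (a b : ℕ) : ∑ i, pairFun a b i = a + b := by
  simp [Fin.sum_univ_two, pairFun]

theorem pairFun_eval0 (A B : ℕ) {i : Fin 2} (h : i.1 = 0) : pairFun A B i = A := by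
  simp [pairFun, h]

theorem pairFun_eval1 (A B : ℕ) {i : Fin 2} (h : i.1 ≠ 0) : pairFun A B i = B := by
  simp [pairFun, h]

theorem pairP_fst {a b : ℕ} (p : P a) (q : P b) {i : Fin 2} (h : i.1 = 0) :
    HEq (pairP p q i) p := by
  simp only [pairP, dif_pos h]; exact castP_heq _ _

theorem pairP_snd {a b : ℕ} (p : P a) (q : P b) {i : Fin 2} (h : i.1 ≠ 0) :
    HEq (pairP p q i) q := by
  simp only [pairP, dif_neg h]; exact castP_heq _ _

theorem sum_fin_two {n : ℕ} (h : n = 2) (g : Fin n → ℕ) :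
    ∑ j, g j = g ⟨0, by omega⟩ + g ⟨1, by omega⟩ := by subst h; rw [Fin.sum_univ_two]; rfl

theorem sum_fin_one {n : ℕ} (h : n = 1) (g : Fin n → ℕ) : ∑ j, g j = g ⟨0, by omega⟩ := by
  subst h; rw [Fin.sum_univ_one]; rfl

theorem finSigmaMk_pair_val0 {A B : ℕ} {i : Fin 2} (hi : i.1 = 0)
    (j : Fin (pairFun A B i)) : (finSigmaMk (pairFun A B) i j).1 = j.1 := by
  rcases i with ⟨iv, hlt⟩
  have hv : iv = 0 := hi
  subst hv
  have he : Finset.filter (fun l => l < (⟨0, by omega⟩ : Fin 2)) Finset.univ = ∅ := by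
    apply Finset.filter_eq_empty_iff.mpr
    intro l _
    simp [Fin.lt_def]
  simp [finSigmaMk, he]

theorem finSigmaMk_pair_val1 {A B : ℕ} {i : Fin 2} (hi : i.1 = 1)
    (j : Fin (pairFun A B i)) : (finSigmaMk (pairFun A B) i j).1 = A + j.1 := by
  rcases i with ⟨iv, hlt⟩
  have hv : iv = 1 := hi
  subst hv
  simp [finSigmaMk, pairFun, Finset.sum_filter, Fin.sum_univ_two]

variable (gamma : OpGamma P) (idP : P 1) (m : P 2)

/-- The binary product `μ(p,q) = γ(m; p, q)`. -/
def mu {a b : ℕ} (p : P a) (q : P b) : P (a + b) :=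
  castP (pairFun_sum a b) (gamma (pairFun a b) m (pairP p q))

theorem mu_heq {a b : ℕ} (p : P a) (q : P b) :
    HEq (mu gamma m p q) (gamma (pairFun a b) m (pairP p q)) := castP_heq _ _

/-- The binary product forced into degree `N` (zero if degrees don't match). -/
def muN (N : ℕ) {a b : ℕ} (p : P a) (q : P b) : P N :=
  if h : a + b = N then castP h (mu gamma m p q) else 0

theorem muN_self {a b : ℕ} (p : P a) (q : P b) :
    muN gamma m (a + b) p q = mu gamma m p q := by
  unfold muN; rw [dif_pos rfl]; rfl

theorem muN_congr {N a b a' b' : ℕ} (ha : a = a') (hb : b = b') {p : P a} {p' : P a'}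
    {q : P b} {q' : P b'} (hp : HEq p p') (hq : HEq q q') :
    muN gamma m N p q = muN gamma m N p' q' := by
  subst ha; subst hb; cases hp; cases hq; rfl

theorem muN_heq {N a b : ℕ} (h : a + b = N) (p : P a) (q : P b) :
    HEq (muN gamma m N p q) (mu gamma m p q) := by
  subst h; rw [muN_self]

variable (idP : P 1) (H : IsOperadMul gamma idP m)
include H

theorem mu_add_left {a b : ℕ} (p p' : P a) (q : P b) :
    mu gamma m (p + p') q = mu gamma m p q + mu gamma m p' q := by
  unfold mu
  rw [← castP_add]
  congr 1
  refine gamma_add_input gamma idP m H _ m _ (pairP p q) (pairP p' q) ⟨0, by omega⟩ ?_ ?_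
  · intro j hj
    have hj' : j.1 ≠ 0 := fun h => hj (Fin.ext h)
    simp [pairP, dif_neg hj', show j ≠ 0 from fun h => hj' (by rw [h]; rfl)]
  · simp [pairP, castP_add]

theorem mu_add_right {a b : ℕ} (p : P a) (q q' : P b) :
    mu gamma m p (q + q') = mu gamma m p q + mu gamma m p q' := by
  unfold mu
  rw [← castP_add]
  congr 1
  refine gamma_add_input gamma idP m H _ m _ (pairP p q) (pairP p q') ⟨1, by omega⟩ ?_ ?_
  · intro j hj
    have hj' : j.1 = 0 := by
      have := j.2
      have : j.1 ≠ 1 := fun h => hj (Fin.ext h)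
      omega
    simp [pairP, dif_pos hj', show j = 0 from Fin.ext hj']
  · have h1 : ((⟨1, by decide⟩ : Fin 2) : Fin 2).1 ≠ 0 := by decide
    simp [pairP, dif_neg h1, castP_add]

theorem mu_zero_left {a b : ℕ} (q : P b) : mu gamma m (0 : P a) q = 0 := by
  have h0 := gamma_zero_input gamma idP m H (pairFun a b) m (pairP (0 : P a) q) ⟨0, by omega⟩
    (by simp [pairP, castP_zero])
  unfold mu
  exact (congrArg (castP _) h0).trans (castP_zero _)

theorem mu_zero_right {a b : ℕ} (p : P a) : mu gamma m p (0 : P b) = 0 := by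
  have h1 : ((⟨1, by decide⟩ : Fin 2) : Fin 2).1 ≠ 0 := by decide
  have h0 := gamma_zero_input gamma idP m H (pairFun a b) m (pairP p (0 : P b)) ⟨1, by decide⟩
    (by simp [pairP, dif_neg h1, castP_zero])
  unfold mu
  exact (congrArg (castP _) h0).trans (castP_zero _)

theorem muN_add_left {N a b : ℕ} (p p' : P a) (q : P b) :
    muN gamma m N (p + p') q = muN gamma m N p q + muN gamma m N p' q := by
  unfold muN
  split
  · rw [mu_add_left gamma m idP H, castP_add]
  · simp

theorem muN_add_right {N a b : ℕ} (p : P a) (q q' : P b) :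
    muN gamma m N p (q + q') = muN gamma m N p q + muN gamma m N p q' := by
  unfold muN
  split
  · rw [mu_add_right gamma m idP H, castP_add]
  · simp

theorem muN_zero_left {N a b : ℕ} (q : P b) : muN gamma m N (0 : P a) q = 0 := by
  unfold muN
  split
  · rw [mu_zero_left gamma m idP H, castP_zero]
  · rfl

theorem muN_zero_right {N a b : ℕ} (p : P a) : muN gamma m N p (0 : P b) = 0 := by
  unfold muN
  split
  · rw [mu_zero_right gamma m idP H, castP_zero]
  · rfl

end Mu

section Assoc
set_option linter.unusedSectionVars false
set_option maxHeartbeats 2000000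

variable {P : ℕ → Type} [∀ n, AddCommGroup (P n)] [∀ n, Module ℂ (P n)]

/-- A triple of naturals keyed on a natural index. -/
def tf3 (a b c : ℕ) (v : ℕ) : ℕ := if v = 0 then a else if v = 1 then b else c

/-- A triple of operators keyed on a natural index. -/
def tP3 {a b c : ℕ} (p : P a) (q : P b) (r : P c) (v : ℕ) : P (tf3 a b c v) :=
  if h0 : v = 0 then castP (by simp [tf3, h0]) p
  else if h1 : v = 1 then castP (by simp [tf3, h0, h1]) q
  else castP (by simp [tf3, h0, h1]) r

theorem tP3_v0 {a b c : ℕ} (p : P a) (q : P b) (r : P c) {v : ℕ} (h : v = 0) :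
    HEq (tP3 p q r v) p := by
  simp only [tP3, dif_pos h]; exact castP_heq _ _

theorem tP3_v1 {a b c : ℕ} (p : P a) (q : P b) (r : P c) {v : ℕ} (h : v = 1) :
    HEq (tP3 p q r v) q := by
  have h0 : v ≠ 0 := by omega
  simp only [tP3, dif_neg h0, dif_pos h]; exact castP_heq _ _

theorem tP3_v2 {a b c : ℕ} (p : P a) (q : P b) (r : P c) {v : ℕ} (h0 : v ≠ 0) (h1 : v ≠ 1) :
    HEq (tP3 p q r v) r := by
  simp only [tP3, dif_neg h0, dif_neg h1]; exact castP_heq _ _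

variable (gamma : OpGamma P) (idP : P 1) (m : P 2) (H : IsOperadMul gamma idP m)
include H

theorem mu_assoc {a b c : ℕ} (p : P a) (q : P b) (r : P c) :
    HEq (mu gamma m (mu gamma m p q) r) (mu gamma m p (mu gamma m q r)) := by
  have h21 := H.assoc (pairFun 2 1) m (pairP m idP)
    (fun l => tf3 a b c l.1) (fun l => tP3 p q r l.1)
  have h12 := H.assoc (pairFun 1 2) m (pairP idP m)
    (fun l => tf3 a b c l.1) (fun l => tP3 p q r l.1)
  have A1 : HEq (mu gamma m (mu gamma m p q) r)
      (gamma (fun i => ∑ j : Fin (pairFun 2 1 i), tf3 a b c (finSigmaMk (pairFun 2 1) i j).1) m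
        (fun i => gamma (fun j => tf3 a b c (finSigmaMk (pairFun 2 1) i j).1) (pairP m idP i)
          (fun j => tP3 p q r (finSigmaMk (pairFun 2 1) i j).1))) := by
    refine (mu_heq gamma m _ _).trans ?_
    refine gamma_congr' gamma ?_ ?_
    · intro i
      by_cases hi : i.1 = 0
      · rw [pairFun_eval0 _ _ hi, sum_fin_two (pairFun_eval0 2 1 hi)]
        simp [finSigmaMk_pair_val0, hi, tf3]
      · have hi1 : i.1 = 1 := by have := i.2; omega
        rw [pairFun_eval1 _ _ hi, sum_fin_one (pairFun_eval1 2 1 hi)]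
        simp [finSigmaMk_pair_val1, hi1, tf3]
    · intro i
      by_cases hi : i.1 = 0
      · refine (pairP_fst _ _ hi).trans ?_
        refine (mu_heq gamma m p q).trans ?_
        refine gamma_congr gamma (pairFun_eval0 2 1 hi).symm ?_ (pairP_fst m idP hi).symm ?_
        · intro j
          by_cases hj : j.1 = 0
          · rw [pairFun_eval0 _ _ hj]
            simp [finSigmaMk_pair_val0, Fin.coe_cast, hi, hj, tf3]
          · have hj1 : j.1 = 1 := by have := j.2; omega
            rw [pairFun_eval1 _ _ hj]
            simp [finSigmaMk_pair_val0, Fin.coe_cast, hi, hj1, tf3]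
        · intro j
          by_cases hj : j.1 = 0
          · refine (pairP_fst p q hj).trans ?_
            refine (tP3_v0 p q r ?_).symm
            simp [finSigmaMk_pair_val0, Fin.coe_cast, hi, hj]
          · have hj1 : j.1 = 1 := by have := j.2; omega
            refine (pairP_snd p q hj).trans ?_
            refine (tP3_v1 p q r ?_).symm
            simp [finSigmaMk_pair_val0, Fin.coe_cast, hi, hj1]
      · have hi1 : i.1 = 1 := by have := i.2; omega
        refine (pairP_snd _ _ hi).trans ?_
        refine ((H.unit_left c r).symm).trans ?_
        refine gamma_congr gamma (pairFun_eval1 2 1 hi).symm ?_ (pairP_snd m idP hi).symm ?_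
        · intro j
          have hj0 : j.1 = 0 := by have := j.2; omega
          rw [finSigmaMk_pair_val1 hi1, Fin.val_cast, hj0]
          simp [finSigmaMk_pair_val1, Fin.coe_cast, hi1, hj0, tf3, pairFun]
        · intro j
          have hj0 : j.1 = 0 := by have := j.2; omega
          refine HEq.symm (tP3_v2 p q r ?_ ?_) <;>
            (rw [finSigmaMk_pair_val1 hi1, Fin.val_cast, hj0]; simp [finSigmaMk_pair_val1, Fin.coe_cast, hi1, hj0, pairFun])
  have A2 : HEq (mu gamma m p (mu gamma m q r))
      (gamma (fun i => ∑ j : Fin (pairFun 1 2 i), tf3 a b c (finSigmaMk (pairFun 1 2) i j).1) m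
        (fun i => gamma (fun j => tf3 a b c (finSigmaMk (pairFun 1 2) i j).1) (pairP idP m i)
          (fun j => tP3 p q r (finSigmaMk (pairFun 1 2) i j).1))) := by
    refine (mu_heq gamma m _ _).trans ?_
    refine gamma_congr' gamma ?_ ?_
    · intro i
      by_cases hi : i.1 = 0
      · rw [pairFun_eval0 _ _ hi, sum_fin_one (pairFun_eval0 1 2 hi)]
        simp [finSigmaMk_pair_val0, hi, tf3]
      · have hi1 : i.1 = 1 := by have := i.2; omega
        rw [pairFun_eval1 _ _ hi, sum_fin_two (pairFun_eval1 1 2 hi)]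
        rw [finSigmaMk_pair_val1 hi1, finSigmaMk_pair_val1 hi1]
        simp [finSigmaMk_pair_val1, hi1, tf3, pairFun]
    · intro i
      by_cases hi : i.1 = 0
      · refine (pairP_fst _ _ hi).trans ?_
        refine ((H.unit_left a p).symm).trans ?_
        refine gamma_congr gamma (pairFun_eval0 1 2 hi).symm ?_ (pairP_fst idP m hi).symm ?_
        · intro j
          have hj0 : j.1 = 0 := by have := j.2; omega
          simp [finSigmaMk_pair_val0, Fin.coe_cast, hi, hj0, tf3]
        · intro j
          have hj0 : j.1 = 0 := by have := j.2; omega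
          refine HEq.symm (tP3_v0 p q r ?_)
          simp [finSigmaMk_pair_val0, Fin.coe_cast, hi, hj0]
      · have hi1 : i.1 = 1 := by have := i.2; omega
        refine (pairP_snd _ _ hi).trans ?_
        refine (mu_heq gamma m q r).trans ?_
        refine gamma_congr gamma (pairFun_eval1 1 2 hi).symm ?_ (pairP_snd idP m hi).symm ?_
        · intro j
          by_cases hj : j.1 = 0
          · rw [pairFun_eval0 _ _ hj]
            rw [finSigmaMk_pair_val1 hi1, Fin.val_cast, hj]
            simp [finSigmaMk_pair_val1, Fin.coe_cast, hi1, hj, tf3, pairFun]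
          · have hj1 : j.1 = 1 := by have := j.2; omega
            rw [pairFun_eval1 _ _ hj]
            rw [finSigmaMk_pair_val1 hi1, Fin.val_cast, hj1]
            simp [finSigmaMk_pair_val1, Fin.coe_cast, hi1, hj1, tf3, pairFun]
        · intro j
          by_cases hj : j.1 = 0
          · refine (pairP_fst q r hj).trans ?_
            refine (tP3_v1 p q r ?_).symm
            rw [finSigmaMk_pair_val1 hi1, Fin.val_cast, hj]
          · have hj1 : j.1 = 1 := by have := j.2; omega
            refine (pairP_snd q r hj).trans ?_
            refine (tP3_v2 p q r ?_ ?_).symm <;>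
              (rw [finSigmaMk_pair_val1 hi1, Fin.val_cast, hj1]; simp [finSigmaMk_pair_val1, Fin.coe_cast, hi1, hj1, pairFun])
  have E3 : HEq
      (gamma (fun l : Fin (∑ i, pairFun 2 1 i) => tf3 a b c l.1)
        (gamma (pairFun 2 1) m (pairP m idP)) (fun l => tP3 p q r l.1))
      (gamma (fun l : Fin (∑ i, pairFun 1 2 i) => tf3 a b c l.1)
        (gamma (pairFun 1 2) m (pairP idP m)) (fun l => tP3 p q r l.1)) := by
    have hk : (∑ i, pairFun 2 1 i) = (∑ i, pairFun 1 2 i) := by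
      rw [pairFun_sum, pairFun_sum]
    refine gamma_congr gamma hk ?_ H.mul_op ?_
    · intro l; rfl
    · intro l; exact HEq.rfl
  exact ((A1.trans h21.symm).trans E3).trans (h12.trans A2.symm)

theorem muN_assoc {N a b c : ℕ} (h : a + b + c = N) (p : P a) (q : P b) (r : P c) :
    muN gamma m N (muN gamma m (a + b) p q) r
      = muN gamma m N p (muN gamma m (b + c) q r) := by
  subst h
  have e1 : muN gamma m (a + b + c) (muN gamma m (a + b) p q) r
      = mu gamma m (mu gamma m p q) r := by
    rw [muN_self, muN_self]
  have e2 : muN gamma m (a + b + c) p (muN gamma m (b + c) q r)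
      = castP (show a + (b + c) = a + b + c by omega) (mu gamma m p (mu gamma m q r)) := by
    have e3 : muN gamma m (b + c) q r = mu gamma m q r := muN_self gamma m q r
    rw [e3]
    unfold muN
    rw [dif_pos (show a + (b + c) = a + b + c by omega)]
  rw [e1, e2]
  exact castP_eq_castP (show a + b + c = a + b + c from rfl)
    (show a + (b + c) = a + b + c by omega) (mu_assoc gamma idP m H p q r)

end Assoc

section Times
set_option linter.unusedSectionVars false
set_option maxHeartbeats 2000000

variable {P : ℕ → Type} [∀ n, AddCommGroup (P n)] [∀ n, Module ℂ (P n)]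

theorem heq_fun_congr (z : Ser P) {a b : ℕ} (h : a = b) : HEq (z a) (z b) := by subst h; rfl

variable (gamma : OpGamma P) (idP : P 1) (m : P 2)

/-- One composition-indexed term of the substitution product. -/
def gammaN {N : ℕ} (c : Composition N) (p : P c.length) (z : Ser P) : P N :=
  castP c.sum_blocksFun (gamma c.blocksFun p (fun i => z (c.blocksFun i)))

theorem timesS_apply (x z : Ser P) {N : ℕ} (hN : N ≠ 0) :
    timesS gamma x z N = ∑ c : Composition N, gammaN gamma c (x c.length) z := by
  rw [timesS, dif_neg hN]; rfl

theorem timesS_apply_zero (x z : Ser P) : timesS gamma x z 0 = 0 := by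
  rw [timesS, dif_pos rfl]

theorem cdotSS_apply (x y : Ser P) (N : ℕ) :
    cdotSS gamma m x y N = ∑ k ∈ Finset.Ioo 0 N, muN gamma m N (x k) (y (N - k)) := by
  rw [cdotSS, ← Finset.sum_attach (Finset.Ioo 0 N) (fun k => muN gamma m N (x k) (y (N - k)))]
  apply Finset.sum_congr rfl
  intro k _
  have hk := Finset.mem_Ioo.mp k.2
  unfold muN
  rw [dif_pos (show k.1 + (N - k.1) = N by omega)]
  unfold mu
  rw [castP_castP]

theorem cdotSS_apply_zero (x y : Ser P) : cdotSS gamma m x y 0 = 0 := by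
  rw [cdotSS_apply]; simp

variable (H : IsOperadMul gamma idP m)
include H

theorem gammaN_add {N : ℕ} (c : Composition N) (p p' : P c.length) (z : Ser P) :
    gammaN gamma c (p + p') z = gammaN gamma c p z + gammaN gamma c p' z := by
  unfold gammaN
  rw [← castP_add]
  exact congrArg (castP c.sum_blocksFun) (H.add_left c.blocksFun p p' (fun i => z (c.blocksFun i)))

theorem gammaN_zero {N : ℕ} (c : Composition N) (z : Ser P) :
    gammaN gamma c (0 : P c.length) z = 0 := by
  have h0 := gamma_zero_left gamma idP m H c.blocksFun (fun i => z (c.blocksFun i))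
  unfold gammaN
  exact (congrArg (castP c.sum_blocksFun) h0).trans (castP_zero _)

theorem gammaN_sum {N : ℕ} (c : Composition N) {ι : Type*} (s : Finset ι)
    (f : ι → P c.length) (z : Ser P) :
    gammaN gamma c (∑ i ∈ s, f i) z = ∑ i ∈ s, gammaN gamma c (f i) z := by
  classical
  induction s using Finset.induction with
  | empty => simp [gammaN_zero gamma idP m H]
  | insert a s hni ih =>
      rw [Finset.sum_insert hni, Finset.sum_insert hni, gammaN_add gamma idP m H, ih]

theorem timesS_add_left (x x' z : Ser P) :
    timesS gamma (x + x') z = timesS gamma x z + timesS gamma x' z := by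
  funext N
  rcases eq_or_ne N 0 with rfl | hN
  · simp [timesS]
  · rw [Pi.add_apply, timesS_apply gamma _ _ hN, timesS_apply gamma _ _ hN,
      timesS_apply gamma _ _ hN, ← Finset.sum_add_distrib]
    refine Finset.sum_congr rfl fun c _ => ?_
    exact gammaN_add gamma idP m H c (x c.length) (x' c.length) z

theorem timesS_zero_left (z : Ser P) : timesS gamma (0 : Ser P) z = 0 := by
  funext N
  rcases eq_or_ne N 0 with rfl | hN
  · simp [timesS]
  · rw [timesS_apply gamma _ _ hN]
    have h : ∀ c ∈ (Finset.univ : Finset (Composition N)),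
        gammaN gamma c ((0 : Ser P) c.length) z = 0 := fun c _ => gammaN_zero gamma idP m H c z
    exact (Finset.sum_congr rfl h).trans Finset.sum_const_zero

theorem cdotSS_add_left (x x' y : Ser P) :
    cdotSS gamma m (x + x') y = cdotSS gamma m x y + cdotSS gamma m x' y := by
  funext N
  rw [Pi.add_apply, cdotSS_apply, cdotSS_apply, cdotSS_apply, ← Finset.sum_add_distrib]
  refine Finset.sum_congr rfl fun k _ => ?_
  exact muN_add_left gamma m idP H (x k) (x' k) (y (N - k))

theorem cdotSS_add_right (x y y' : Ser P) :
    cdotSS gamma m x (y + y') = cdotSS gamma m x y + cdotSS gamma m x y' := by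
  funext N
  rw [Pi.add_apply, cdotSS_apply, cdotSS_apply, cdotSS_apply, ← Finset.sum_add_distrib]
  refine Finset.sum_congr rfl fun k _ => ?_
  exact muN_add_right gamma m idP H (x k) (y (N - k)) (y' (N - k))

theorem cdotSS_zero_left (y : Ser P) : cdotSS gamma m (0 : Ser P) y = 0 := by
  funext N
  rw [cdotSS_apply]
  have h : ∀ k ∈ Finset.Ioo 0 N, muN gamma m N ((0 : Ser P) k) (y (N - k)) = 0 :=
    fun k _ => muN_zero_left gamma m idP H (y (N - k))
  exact (Finset.sum_congr rfl h).trans Finset.sum_const_zero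

theorem cdotSS_zero_right (x : Ser P) : cdotSS gamma m x (0 : Ser P) = 0 := by
  funext N
  rw [cdotSS_apply]
  have h : ∀ k ∈ Finset.Ioo 0 N, muN gamma m N (x k) ((0 : Ser P) (N - k)) = 0 :=
    fun k _ => muN_zero_right gamma m idP H (x k)
  exact (Finset.sum_congr rfl h).trans Finset.sum_const_zero

theorem gammaN_one (z : Ser P) {N : ℕ} (c : Composition N) (hc : c.length = 1) :
    gammaN gamma c (Iser idP c.length) z = z N := by
  have hb : ∀ i : Fin c.length, c.blocksFun i = N := by
    intro i
    have hsum := c.sum_blocksFun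
    rw [sum_fin_one hc] at hsum
    have hi : i = ⟨0, by omega⟩ := Fin.ext (by have := i.2; omega)
    rw [hi, hsum]
  have hI : HEq (Iser (P := P) idP c.length) idP := by
    rw [show Iser (P := P) idP c.length = castP hc.symm idP from by rw [Iser, dif_pos hc]]
    exact castP_heq _ _
  refine eq_of_heq ((castP_heq _ _).trans ?_)
  refine HEq.trans ?_ (H.unit_left N (z N))
  exact gamma_congr gamma hc (fun i => hb i) hI (fun i => heq_fun_congr z (hb i))

theorem timesS_Iser (z : Ser P) (hz : z 0 = 0) : timesS gamma (Iser idP) z = z := by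
  funext N
  rcases eq_or_ne N 0 with rfl | hN
  · rw [timesS_apply_zero, hz]
  · rw [timesS_apply gamma _ _ hN]
    have hN' : 0 < N := Nat.pos_of_ne_zero hN
    rw [Finset.sum_eq_single_of_mem (Composition.single N hN') (Finset.mem_univ _)]
    · exact gammaN_one gamma idP m H z _ (Composition.single_length hN')
    · intro c _ hc
      have hlen : c.length ≠ 1 := by
        intro h; exact hc ((Composition.eq_single_iff_length hN').mpr h)
      have hIser : Iser (P := P) idP c.length = 0 := by rw [Iser, dif_neg hlen]
      rw [hIser, gammaN_zero gamma idP m H]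

end Times

section Split
set_option linter.unusedSectionVars false
set_option maxHeartbeats 4000000

variable {P : ℕ → Type} [∀ n, AddCommGroup (P n)] [∀ n, Module ℂ (P n)]

/-- Concatenation of compositions. -/
def compAppend {k l : ℕ} (c1 : Composition k) (c2 : Composition l) : Composition (k + l) :=
  ⟨c1.blocks ++ c2.blocks,
   fun hi => (List.mem_append.mp hi).elim (fun h => c1.blocks_pos h) (fun h => c2.blocks_pos h),
   by rw [List.sum_append, c1.blocks_sum, c2.blocks_sum]⟩

/-- Transport of compositions along an equality. -/
def compCast {M N : ℕ} (h : M = N) (c : Composition M) : Composition N := h ▸ c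

theorem compCast_blocks {M N : ℕ} (h : M = N) (c : Composition M) :
    (compCast h c).blocks = c.blocks := by subst h; rfl

theorem compCast_length {M N : ℕ} (h : M = N) (c : Composition M) :
    (compCast h c).length = c.length := by subst h; rfl

/-- The first `j` blocks of a composition. -/
def compTake {N : ℕ} (c : Composition N) (j : ℕ) : Composition ((c.blocks.take j).sum) :=
  ⟨c.blocks.take j, fun hi => c.blocks_pos (List.mem_of_mem_take hi), rfl⟩

/-- The blocks of a composition after the first `j`. -/
def compDrop {N : ℕ} (c : Composition N) (j : ℕ) : Composition ((c.blocks.drop j).sum) :=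
  ⟨c.blocks.drop j, fun hi => c.blocks_pos (List.mem_of_mem_drop hi), rfl⟩

theorem compTake_length {N : ℕ} (c : Composition N) (j : ℕ) (h : j ≤ c.length) :
    (compTake c j).length = j := by
  show (c.blocks.take j).length = j
  rw [List.length_take, c.blocks_length]
  omega

theorem compDrop_length {N : ℕ} (c : Composition N) (j : ℕ) :
    (compDrop c j).length = c.length - j := by
  show (c.blocks.drop j).length = c.length - j
  rw [List.length_drop, c.blocks_length]

theorem take_drop_sum {N : ℕ} (c : Composition N) (j : ℕ) :
    (c.blocks.take j).sum + (c.blocks.drop j).sum = N := by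
  rw [← List.sum_append, List.take_append_drop, c.blocks_sum]

theorem blocksFun_congr {N : ℕ} (c : Composition N) {w w' : Fin c.length} (h : w.1 = w'.1) :
    c.blocksFun w = c.blocksFun w' := congrArg c.blocksFun (Fin.ext h)

theorem compTake_blocksFun {N : ℕ} (c : Composition N) (j : ℕ) (hj : j ≤ c.length)
    (t : Fin (compTake c j).length) :
    (compTake c j).blocksFun t
      = c.blocksFun ⟨t.1, by
          have ht := t.2
          have h2 := compTake_length c j hj
          omega⟩ := by
  show (c.blocks.take j).get t = c.blocks.get _
  exact List.getElem_take ..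

theorem compDrop_blocksFun {N : ℕ} (c : Composition N) (j : ℕ) (hj : j ≤ c.length)
    (t : Fin (compDrop c j).length) :
    (compDrop c j).blocksFun t
      = c.blocksFun ⟨j + t.1, by
          have ht := t.2
          have h2 := compDrop_length c j
          omega⟩ := by
  show (c.blocks.drop j).get t = c.blocks.get _
  exact List.getElem_drop ..

theorem sum_fin_cast {n n' : ℕ} (h : n = n') (f : Fin n → ℕ) (g : Fin n' → ℕ)
    (hfg : ∀ t : Fin n, f t = g (Fin.cast h t)) : ∑ t, f t = ∑ t, g t := by
  subst h
  exact Finset.sum_congr rfl (fun t _ => hfg t)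

variable (gamma : OpGamma P) (idP : P 1) (m : P 2) (H : IsOperadMul gamma idP m)
include H

theorem key_split (x y z : Ser P) {N : ℕ} (c : Composition N) (j : ℕ)
    (hj0 : 0 < j) (hjL : j < c.length) :
    gammaN gamma c (muN gamma m c.length (x j) (y (c.length - j))) z
      = muN gamma m N (gammaN gamma (compTake c j) (x (compTake c j).length) z)
          (gammaN gamma (compDrop c j) (y (compDrop c j).length) z) := by
  have hjle : j ≤ c.length := le_of_lt hjL
  have hc1len : (compTake c j).length = j := compTake_length c j hjle
  have hc2len : (compDrop c j).length = c.length - j := compDrop_length c j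
  have hk12 : (c.blocks.take j).sum + (c.blocks.drop j).sum = N := take_drop_sum c j
  have hs : ∑ i, pairFun j (c.length - j) i = c.length := by rw [pairFun_sum]; omega
  have hA := H.assoc (pairFun j (c.length - j)) m (pairP (x j) (y (c.length - j)))
    (fun l => c.blocksFun (Fin.cast hs l)) (fun l => z (c.blocksFun (Fin.cast hs l)))
  have hpin : HEq (gamma (pairFun j (c.length - j)) m (pairP (x j) (y (c.length - j))))
      (muN gamma m c.length (x j) (y (c.length - j))) :=
    ((muN_heq gamma m (show j + (c.length - j) = c.length by omega) _ _).trans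
      (mu_heq gamma m _ _)).symm
  have EL : HEq
      (gamma (fun l => c.blocksFun (Fin.cast hs l))
        (gamma (pairFun j (c.length - j)) m (pairP (x j) (y (c.length - j))))
        (fun l => z (c.blocksFun (Fin.cast hs l))))
      (gamma c.blocksFun (muN gamma m c.length (x j) (y (c.length - j)))
        (fun i => z (c.blocksFun i))) :=
    gamma_congr gamma hs (fun l => rfl) hpin (fun l => HEq.rfl)
  set g1 := gammaN gamma (compTake c j) (x (compTake c j).length) z with hg1
  set g2 := gammaN gamma (compDrop c j) (y (compDrop c j).length) z with hg2
  have ER : HEq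
      (gamma (fun i : Fin 2 => ∑ t : Fin (pairFun j (c.length - j) i),
          c.blocksFun (Fin.cast hs (finSigmaMk (pairFun j (c.length - j)) i t))) m
        (fun i => gamma
          (fun t => c.blocksFun (Fin.cast hs (finSigmaMk (pairFun j (c.length - j)) i t)))
          (pairP (x j) (y (c.length - j)) i)
          (fun t => z (c.blocksFun (Fin.cast hs (finSigmaMk (pairFun j (c.length - j)) i t))))))
      (gamma (pairFun (c.blocks.take j).sum (c.blocks.drop j).sum) m (pairP g1 g2)) := by
    refine gamma_congr' gamma ?_ ?_
    · intro i
      by_cases hi : i.1 = 0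
      · conv_rhs => rw [pairFun_eval0 _ _ hi]
        refine (sum_fin_cast (by rw [pairFun_eval0 _ _ hi, hc1len]) _ _ ?_).trans
          ((compTake c j).sum_blocksFun)
        intro t
        rw [compTake_blocksFun c j hjle]
        apply blocksFun_congr
        simp [finSigmaMk_pair_val0, hi, Fin.coe_cast]
      · have hi1 : i.1 = 1 := by have := i.2; omega
        conv_rhs => rw [pairFun_eval1 _ _ hi]
        refine (sum_fin_cast (by rw [pairFun_eval1 _ _ hi, hc2len]) _ _ ?_).trans
          ((compDrop c j).sum_blocksFun)
        intro t
        rw [compDrop_blocksFun c j hjle]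
        apply blocksFun_congr
        simp [finSigmaMk_pair_val1, hi1, Fin.coe_cast]
    · intro i
      by_cases hi : i.1 = 0
      · refine HEq.trans ?_ (pairP_fst g1 g2 hi).symm
        refine HEq.trans ?_ (castP_heq ((compTake c j).sum_blocksFun) _).symm
        refine gamma_congr gamma (show pairFun j (c.length - j) i = (compTake c j).length by
          rw [pairFun_eval0 _ _ hi, hc1len]) ?_ ?_ ?_
        · intro t
          rw [compTake_blocksFun c j hjle]
          apply blocksFun_congr
          simp [finSigmaMk_pair_val0, hi, Fin.coe_cast]
        · exact (pairP_fst _ _ hi).trans (heq_fun_congr x hc1len.symm)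
        · intro t
          refine heq_fun_congr z ?_
          rw [compTake_blocksFun c j hjle]
          apply blocksFun_congr
          simp [finSigmaMk_pair_val0, hi, Fin.coe_cast]
      · have hi1 : i.1 = 1 := by have := i.2; omega
        refine HEq.trans ?_ (pairP_snd g1 g2 hi).symm
        refine HEq.trans ?_ (castP_heq ((compDrop c j).sum_blocksFun) _).symm
        refine gamma_congr gamma (show pairFun j (c.length - j) i = (compDrop c j).length by
          rw [pairFun_eval1 _ _ hi, hc2len]) ?_ ?_ ?_
        · intro t
          rw [compDrop_blocksFun c j hjle]
          apply blocksFun_congr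
          simp [finSigmaMk_pair_val1, hi1, Fin.coe_cast]
        · exact (pairP_snd _ _ hi).trans (heq_fun_congr y hc2len.symm)
        · intro t
          refine heq_fun_congr z ?_
          rw [compDrop_blocksFun c j hjle]
          apply blocksFun_congr
          simp [finSigmaMk_pair_val1, hi1, Fin.coe_cast]
  have chain : HEq
      (gamma c.blocksFun (muN gamma m c.length (x j) (y (c.length - j)))
        (fun i => z (c.blocksFun i)))
      (mu gamma m g1 g2) := ((EL.symm.trans hA).trans ER).trans (mu_heq gamma m g1 g2).symm
  have hR : muN gamma m N g1 g2 = castP hk12 (mu gamma m g1 g2) := by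
    unfold muN; rw [dif_pos hk12]
  rw [hR]
  exact castP_eq_castP c.sum_blocksFun hk12 chain

end Split

section Distrib
set_option linter.unusedSectionVars false
set_option maxHeartbeats 4000000

theorem sigmaNat_ext {a a' b b' : ℕ} (h1 : a = a') (h2 : b = b') :
    (⟨a, b⟩ : Σ _ : ℕ, ℕ) = ⟨a', b'⟩ := by subst h1; subst h2; rfl

theorem sum_Ioo_reindex {M : Type*} [AddCommMonoid M] (N : ℕ) (F : ℕ → ℕ → M) :
    ∑ k ∈ Finset.Ioo 0 N, ∑ j ∈ Finset.Ioo 0 k, F j (k - j)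
      = ∑ j ∈ Finset.Ioo 0 N, ∑ l ∈ Finset.Ioo 0 (N - j), F j l := by
  rw [Finset.sum_sigma' (Finset.Ioo 0 N) (fun k => Finset.Ioo 0 k) (fun k j => F j (k - j))]
  rw [Finset.sum_sigma' (Finset.Ioo 0 N) (fun j => Finset.Ioo 0 (N - j)) (fun j l => F j l)]
  refine Finset.sum_bij' (fun a _ => ⟨a.2, a.1 - a.2⟩) (fun b _ => ⟨b.1 + b.2, b.1⟩)
    ?_ ?_ ?_ ?_ ?_
  · rintro ⟨k, j⟩ ha
    dsimp only at ha ⊢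
    obtain ⟨h1, h2⟩ := Finset.mem_sigma.mp ha
    have h1' : 0 < k ∧ k < N := Finset.mem_Ioo.mp h1
    have h2' : 0 < j ∧ j < k := Finset.mem_Ioo.mp h2
    rw [Finset.mem_sigma, Finset.mem_Ioo, Finset.mem_Ioo]
    dsimp only
    omega
  · rintro ⟨j, l⟩ hb
    dsimp only at hb ⊢
    obtain ⟨h1, h2⟩ := Finset.mem_sigma.mp hb
    have h1' : 0 < j ∧ j < N := Finset.mem_Ioo.mp h1
    have h2' : 0 < l ∧ l < N - j := Finset.mem_Ioo.mp h2
    rw [Finset.mem_sigma, Finset.mem_Ioo, Finset.mem_Ioo]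
    dsimp only
    omega
  · rintro ⟨k, j⟩ ha
    dsimp only at ha ⊢
    obtain ⟨h1, h2⟩ := Finset.mem_sigma.mp ha
    have h1' : 0 < k ∧ k < N := Finset.mem_Ioo.mp h1
    have h2' : 0 < j ∧ j < k := Finset.mem_Ioo.mp h2
    exact sigmaNat_ext (by omega) rfl
  · rintro ⟨j, l⟩ hb
    dsimp only at hb ⊢
    obtain ⟨h1, h2⟩ := Finset.mem_sigma.mp hb
    have h1' : 0 < j ∧ j < N := Finset.mem_Ioo.mp h1
    have h2' : 0 < l ∧ l < N - j := Finset.mem_Ioo.mp h2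
    exact sigmaNat_ext (by omega) (by omega)
  · rintro ⟨k, j⟩ ha
    rfl


theorem sigmaA_ext {N : ℕ} {c c' : Composition N} {j j' : ℕ} (h : c.blocks = c'.blocks)
    (hj : j = j') : (⟨c, j⟩ : Σ _ : Composition N, ℕ) = ⟨c', j'⟩ := by
  obtain rfl := Composition.ext h
  rw [hj]

theorem sigmaB_ext {N k k' : ℕ} (hk : k = k') {u1 : Composition k} {u1' : Composition k'}
    {u2 : Composition (N - k)} {u2' : Composition (N - k')}
    (h1 : u1.blocks = u1'.blocks) (h2 : u2.blocks = u2'.blocks) :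
    (⟨k, (u1, u2)⟩ : Σ k : ℕ, Composition k × Composition (N - k)) = ⟨k', (u1', u2')⟩ := by
  subst hk
  obtain rfl : u1 = u1' := Composition.ext h1
  obtain rfl : u2 = u2' := Composition.ext h2
  rfl

theorem compAppend_length {k l : ℕ} (c1 : Composition k) (c2 : Composition l) :
    (compAppend c1 c2).length = c1.length + c2.length := by
  show (c1.blocks ++ c2.blocks).length = _
  rw [List.length_append, c1.blocks_length, c2.blocks_length]

theorem take_sum_pos {N : ℕ} (c : Composition N) (j : ℕ) (h0 : 0 < j) (hL : 0 < c.length) :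
    0 < (c.blocks.take j).sum := by
  apply List.sum_pos
  · intro a ha; exact c.blocks_pos (List.mem_of_mem_take ha)
  · intro h
    have hlen := congrArg List.length h
    rw [List.length_take] at hlen
    have hbl := c.blocks_length
    simp only [List.length_nil] at hlen
    omega

theorem drop_sum_pos {N : ℕ} (c : Composition N) (j : ℕ) (hj : j < c.length) :
    0 < (c.blocks.drop j).sum := by
  apply List.sum_pos
  · intro a ha; exact c.blocks_pos (List.mem_of_mem_drop ha)
  · intro h
    have hlen := congrArg List.length h
    rw [List.length_drop] at hlen
    have hbl := c.blocks_length
    simp only [List.length_nil] at hlen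
    omega

variable {P : ℕ → Type} [∀ n, AddCommGroup (P n)] [∀ n, Module ℂ (P n)]
variable (gamma : OpGamma P) (idP : P 1) (m : P 2)

theorem muN_idx_heq {N N' a b : ℕ} (h : N = N') (p : P a) (q : P b) :
    HEq (muN gamma m N p q) (muN gamma m N' p q) := by subst h; rfl

theorem muN_congr' {N N' a a' b b' : ℕ} (hN : N = N') (ha : a = a') (hb : b = b')
    {p : P a} {p' : P a'} {q : P b} {q' : P b'} (hp : HEq p p') (hq : HEq q q') :
    HEq (muN gamma m N p q) (muN gamma m N' p' q') := by
  subst hN; subst ha; subst hb; cases hp; cases hq; rfl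

theorem gammaN_compCast_heq {M N' : ℕ} (h : M = N') (c : Composition M) (w z : Ser P) :
    HEq (gammaN gamma (compCast h c) (w (compCast h c).length) z)
      (gammaN gamma c (w c.length) z) := by subst h; rfl

variable (H : IsOperadMul gamma idP m)
include H

theorem muN_sum_left {N a b : ℕ} {ι : Type*} (s : Finset ι) (f : ι → P a) (q : P b) :
    muN gamma m N (∑ i ∈ s, f i) q = ∑ i ∈ s, muN gamma m N (f i) q := by
  classical
  induction s using Finset.induction with
  | empty => simp [muN_zero_left gamma m idP H]
  | insert a s hni ih =>
      rw [Finset.sum_insert hni, Finset.sum_insert hni, muN_add_left gamma m idP H, ih]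

theorem muN_sum_right {N a b : ℕ} {ι : Type*} (s : Finset ι) (p : P a) (f : ι → P b) :
    muN gamma m N p (∑ i ∈ s, f i) = ∑ i ∈ s, muN gamma m N p (f i) := by
  classical
  induction s using Finset.induction with
  | empty => simp [muN_zero_right gamma m idP H]
  | insert a s hni ih =>
      rw [Finset.sum_insert hni, Finset.sum_insert hni, muN_add_right gamma m idP H, ih]

theorem timesS_cdot (x y z : Ser P) :
    timesS gamma (cdotSS gamma m x y) z
      = cdotSS gamma m (timesS gamma x z) (timesS gamma y z) := by
  funext N
  rcases eq_or_ne N 0 with rfl | hN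
  · rw [timesS_apply_zero, cdotSS_apply_zero]
  · rw [timesS_apply gamma _ _ hN, cdotSS_apply]
    have hL : ∀ c ∈ (Finset.univ : Finset (Composition N)),
        gammaN gamma c (cdotSS gamma m x y c.length) z
          = ∑ j ∈ Finset.Ioo 0 c.length,
              gammaN gamma c (muN gamma m c.length (x j) (y (c.length - j))) z := by
      intro c _
      rw [cdotSS_apply, gammaN_sum gamma idP m H]
    rw [Finset.sum_congr rfl hL]
    have hR : ∀ k ∈ Finset.Ioo 0 N,
        muN gamma m N (timesS gamma x z k) (timesS gamma y z (N - k))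
          = ∑ p ∈ (Finset.univ ×ˢ Finset.univ : Finset (Composition k × Composition (N - k))),
              muN gamma m N (gammaN gamma p.1 (x p.1.length) z)
                (gammaN gamma p.2 (y p.2.length) z) := by
      intro k hk
      obtain ⟨h0, h1⟩ := Finset.mem_Ioo.mp hk
      rw [timesS_apply gamma _ _ (by omega), timesS_apply gamma _ _ (by omega),
        muN_sum_left gamma idP m H]
      refine Eq.trans (Finset.sum_congr rfl fun c1 _ => muN_sum_right gamma idP m H _ _ _)
        (Finset.sum_product' Finset.univ Finset.univ
          (fun c1 c2 => muN gamma m N (gammaN gamma c1 (x c1.length) z)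
            (gammaN gamma c2 (y c2.length) z))).symm
    rw [Finset.sum_congr rfl hR]
    rw [Finset.sum_sigma' (Finset.univ : Finset (Composition N)) (fun c => Finset.Ioo 0 c.length)
      (fun c j => gammaN gamma c (muN gamma m c.length (x j) (y (c.length - j))) z)]
    rw [Finset.sum_sigma' (Finset.Ioo 0 N)
      (fun k => (Finset.univ ×ˢ Finset.univ : Finset (Composition k × Composition (N - k))))
      (fun k p => muN gamma m N (gammaN gamma p.1 (x p.1.length) z)
        (gammaN gamma p.2 (y p.2.length) z))]
    refine Finset.sum_bij'
      (fun a _ => ⟨(a.1.blocks.take a.2).sum,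
        (compTake a.1 a.2,
         compCast (by have := take_drop_sum a.1 a.2; omega) (compDrop a.1 a.2))⟩)
      (fun b hb => ⟨compCast (by
          have hb1 := (Finset.mem_sigma.mp hb).1
          rw [Finset.mem_Ioo] at hb1
          omega) (compAppend b.2.1 b.2.2), b.2.1.length⟩)
      ?_ ?_ ?_ ?_ ?_
    · rintro ⟨c, j⟩ ha
      dsimp only at ha ⊢
      have hj := Finset.mem_Ioo.mp (Finset.mem_sigma.mp ha).2
      have hj1 : 0 < j := hj.1
      have hj2 : j < c.length := hj.2
      rw [Finset.mem_sigma]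
      constructor
      · rw [Finset.mem_Ioo]
        dsimp only
        have hpos := take_sum_pos c j hj1 (by omega)
        have hdp := drop_sum_pos c j hj2
        have hsum := take_drop_sum c j
        omega
      · simp
    · rintro ⟨k, c1, c2⟩ hb
      dsimp only at hb ⊢
      have hb1 := Finset.mem_Ioo.mp (Finset.mem_sigma.mp hb).1
      have hbk : 0 < k := hb1.1
      have hbk2 : k < N := hb1.2
      rw [Finset.mem_sigma]
      refine ⟨Finset.mem_univ _, ?_⟩
      rw [Finset.mem_Ioo, compCast_length, compAppend_length]
      dsimp only
      have hl1 := c1.length_pos_of_pos hbk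
      have hl2 := c2.length_pos_of_pos (by omega : 0 < N - k)
      omega
    · rintro ⟨c, j⟩ ha
      dsimp only at ha ⊢
      have hj := Finset.mem_Ioo.mp (Finset.mem_sigma.mp ha).2
      have hj2 : j < c.length := hj.2
      refine sigmaA_ext ?_ ?_
      · rw [compCast_blocks]
        show (compTake c j).blocks ++ (compCast _ (compDrop c j)).blocks = c.blocks
        rw [compCast_blocks]
        exact List.take_append_drop j c.blocks
      · exact compTake_length c j (le_of_lt hj2)
    · rintro ⟨k, c1, c2⟩ hb
      dsimp only at hb ⊢
      refine sigmaB_ext ?_ ?_ ?_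
      · show ((compCast _ (compAppend c1 c2)).blocks.take c1.length).sum = k
        rw [compCast_blocks]
        show ((c1.blocks ++ c2.blocks).take c1.length).sum = k
        rw [← c1.blocks_length, List.take_left, c1.blocks_sum]
      · show ((compCast _ (compAppend c1 c2)).blocks.take c1.length) = c1.blocks
        rw [compCast_blocks]
        show ((c1.blocks ++ c2.blocks).take c1.length) = c1.blocks
        rw [← c1.blocks_length, List.take_left]
      · rw [compCast_blocks]
        show ((compCast _ (compAppend c1 c2)).blocks.drop c1.length) = c2.blocks
        rw [compCast_blocks]
        show ((c1.blocks ++ c2.blocks).drop c1.length) = c2.blocks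
        rw [← c1.blocks_length, List.drop_left]
    · rintro ⟨c, j⟩ ha
      dsimp only at ha ⊢
      have hj := Finset.mem_Ioo.mp (Finset.mem_sigma.mp ha).2
      have hj1 : 0 < j := hj.1
      have hj2 : j < c.length := hj.2
      rw [key_split gamma idP m H x y z c j hj1 hj2]
      refine eq_of_heq (muN_congr' gamma m rfl rfl
        (by have := take_drop_sum c j; omega) HEq.rfl ?_)
      exact (gammaN_compCast_heq gamma _ (compDrop c j) y z).symm

theorem cdotSS_assoc (x y w : Ser P) :
    cdotSS gamma m (cdotSS gamma m x y) w = cdotSS gamma m x (cdotSS gamma m y w) := by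
  funext N
  rw [cdotSS_apply, cdotSS_apply]
  have hL : ∀ k ∈ Finset.Ioo 0 N,
      muN gamma m N (cdotSS gamma m x y k) (w (N - k))
        = ∑ j ∈ Finset.Ioo 0 k,
            muN gamma m N (muN gamma m k (x j) (y (k - j))) (w (N - k)) := by
    intro k _
    rw [cdotSS_apply, muN_sum_left gamma idP m H]
  rw [Finset.sum_congr rfl hL]
  have hR : ∀ j ∈ Finset.Ioo 0 N,
      muN gamma m N (x j) (cdotSS gamma m y w (N - j))
        = ∑ l ∈ Finset.Ioo 0 (N - j),
            muN gamma m N (x j) (muN gamma m (N - j) (y l) (w (N - j - l))) := by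
    intro j _
    rw [cdotSS_apply, muN_sum_right gamma idP m H]
  rw [Finset.sum_congr rfl hR]
  rw [← sum_Ioo_reindex N (fun j l => muN gamma m N (x j) (muN gamma m (N - j) (y l) (w (N - j - l))))]
  refine Finset.sum_congr rfl fun k hk => ?_
  refine Finset.sum_congr rfl fun j hj => ?_
  rw [Finset.mem_Ioo] at hk hj
  have hkj : j + (k - j) = k := by omega
  have step1 : muN gamma m N (muN gamma m k (x j) (y (k - j))) (w (N - k))
      = muN gamma m N (muN gamma m (j + (k - j)) (x j) (y (k - j))) (w (N - k)) :=
    eq_of_heq (muN_congr' gamma m rfl hkj.symm rfl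
      (muN_idx_heq gamma m hkj.symm _ _) HEq.rfl)
  rw [step1, muN_assoc gamma idP m H (by omega) (x j) (y (k - j)) (w (N - k))]
  refine eq_of_heq (muN_congr' gamma m rfl rfl (by omega) HEq.rfl ?_)
  exact muN_congr' gamma m (by omega) rfl (by omega) HEq.rfl (heq_fun_congr w (by omega))
end Distrib

section Final
set_option linter.unusedSectionVars false
set_option maxHeartbeats 2000000

variable {P : ℕ → Type} [∀ n, AddCommGroup (P n)] [∀ n, Module ℂ (P n)]
variable (gamma : OpGamma P) (idP : P 1) (m : P 2)

/-- Left multiplication by `1 + x` on tails. -/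
def Eop (x g : Ser P) : Ser P := g + cdotSS gamma m x g

/-- Right multiplication by `1 + y` on tails. -/
def Fop (g y : Ser P) : Ser P := g + cdotSS gamma m g y

theorem lam_eq (v : Ser P) : lamS gamma idP m v = Fop gamma m (Iser idP) v := rfl

theorem rho_eq (v : Ser P) : rhoS gamma idP m v = Eop gamma m v (Iser idP) := rfl

theorem lam_zero (v : Ser P) : lamS gamma idP m v 0 = 0 := by
  simp [lamS, Iser, cdotSS_apply_zero gamma m]

theorem rho_zero (v : Ser P) : rhoS gamma idP m v 0 = 0 := by
  simp [rhoS, Iser, cdotSS_apply_zero gamma m]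

variable (H : IsOperadMul gamma idP m)
include H

theorem E_mul (a b g : Ser P) :
    Eop gamma m a (Eop gamma m b g) = Eop gamma m (gmul gamma m a b) g := by
  simp only [Eop, gmul, cdotSS_add_left gamma idP m H, cdotSS_add_right gamma idP m H,
    cdotSS_assoc gamma idP m H]
  abel

theorem F_mul (g a b : Ser P) :
    Fop gamma m (Fop gamma m g a) b = Fop gamma m g (gmul gamma m a b) := by
  simp only [Fop, gmul, cdotSS_add_left gamma idP m H, cdotSS_add_right gamma idP m H,
    cdotSS_assoc gamma idP m H]
  abel

theorem EF_comm (x g y : Ser P) :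
    Fop gamma m (Eop gamma m x g) y = Eop gamma m x (Fop gamma m g y) := by
  simp only [Fop, Eop, cdotSS_add_left gamma idP m H, cdotSS_add_right gamma idP m H,
    cdotSS_assoc gamma idP m H]
  abel

theorem conj_eq (a g b : Ser P) :
    conjS gamma m a g b = Fop gamma m (Eop gamma m a g) b := by
  simp only [conjS, Fop, Eop, cdotSS_add_left gamma idP m H]
  abel

theorem Fop_zero (g : Ser P) : Fop gamma m g 0 = g := by
  rw [Fop, cdotSS_zero_right gamma idP m H, add_zero]

theorem gmul_assoc (a b c : Ser P) :
    gmul gamma m (gmul gamma m a b) c = gmul gamma m a (gmul gamma m b c) := by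
  simp only [gmul, cdotSS_add_left gamma idP m H, cdotSS_add_right gamma idP m H,
    cdotSS_assoc gamma idP m H]
  abel

theorem gmul_zero_left (a : Ser P) : gmul gamma m 0 a = a := by
  rw [gmul, cdotSS_zero_left gamma idP m H]
  abel

theorem gmul_zero_right (a : Ser P) : gmul gamma m a 0 = a := by
  rw [gmul, cdotSS_zero_right gamma idP m H]
  abel

theorem T_lam (v g : Ser P) (hg : g 0 = 0) :
    timesS gamma (lamS gamma idP m v) g = Fop gamma m g (timesS gamma v g) := by
  show timesS gamma (Iser idP + cdotSS gamma m (Iser idP) v) g = _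
  rw [timesS_add_left gamma idP m H, timesS_cdot gamma idP m H, timesS_Iser gamma idP m H g hg]
  rfl

theorem T_rho (v g : Ser P) (hg : g 0 = 0) :
    timesS gamma (rhoS gamma idP m v) g = Eop gamma m (timesS gamma v g) g := by
  show timesS gamma (Iser idP + cdotSS gamma m v (Iser idP)) g = _
  rw [timesS_add_left gamma idP m H, timesS_cdot gamma idP m H, timesS_Iser gamma idP m H g hg]
  rfl

end Final

/-- Properties of the left and right translations `λ(h) = I∙h`, `ρ(h) = h∙I` from
`G^{inv}` to `G`: the cocycle identities `λ(h)×λ(h') = λ(h' ∙ (h ↶ λ(h')))` and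
`ρ(h)×ρ(h') = ρ((h ↶ ρ(h')) ∙ h')`, the relation `ρ(h) = h ↷ λ(h) = h∙λ(h)∙h⁻¹`, and the
mixed identities `ρ(h)×λ(h') = (h')⁻¹ ↷ ρ(h' ∙ (h ↶ λ(h')))` and
`λ(h)×ρ(h') = h' ↷ λ((h ↶ ρ(h')) ∙ h')`. -/
theorem lambda_rho_cocycles (P : ℕ → Type) [∀ n, AddCommGroup (P n)] [∀ n, Module ℂ (P n)]
    (gamma : OpGamma P) (idP : P 1) (m : P 2) (H : IsOperadMul gamma idP m)
    (x x' xinv x'inv : Ser P)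
    (hxinv : gmul gamma m x xinv = 0 ∧ gmul gamma m xinv x = 0)
    (hx'inv : gmul gamma m x' x'inv = 0 ∧ gmul gamma m x'inv x' = 0) :
    timesS gamma (lamS gamma idP m x) (lamS gamma idP m x') =
      lamS gamma idP m (gmul gamma m x' (timesS gamma x (lamS gamma idP m x'))) ∧
    timesS gamma (rhoS gamma idP m x) (rhoS gamma idP m x') =
      rhoS gamma idP m (gmul gamma m (timesS gamma x (rhoS gamma idP m x')) x') ∧
    rhoS gamma idP m x = conjS gamma m x (lamS gamma idP m x) xinv ∧
    timesS gamma (rhoS gamma idP m x) (lamS gamma idP m x') =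
      conjS gamma m x'inv
        (rhoS gamma idP m (gmul gamma m x' (timesS gamma x (lamS gamma idP m x')))) x' ∧
    timesS gamma (lamS gamma idP m x) (rhoS gamma idP m x') =
      conjS gamma m x'
        (lamS gamma idP m (gmul gamma m (timesS gamma x (rhoS gamma idP m x')) x')) x'inv := by
  have hlz := lam_zero gamma idP m x'
  have hrz := rho_zero gamma idP m x'
  refine ⟨?_, ?_, ?_, ?_, ?_⟩
  · -- λ(h) × λ(h') = λ(h' ∙ (h ↶ λ(h')))
    calc timesS gamma (lamS gamma idP m x) (lamS gamma idP m x')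
        = Fop gamma m (lamS gamma idP m x') (timesS gamma x (lamS gamma idP m x')) :=
          T_lam gamma idP m H x _ hlz
      _ = Fop gamma m (Fop gamma m (Iser idP) x') (timesS gamma x (lamS gamma idP m x')) := rfl
      _ = Fop gamma m (Iser idP)
            (gmul gamma m x' (timesS gamma x (lamS gamma idP m x'))) :=
          F_mul gamma idP m H _ _ _
      _ = lamS gamma idP m (gmul gamma m x' (timesS gamma x (lamS gamma idP m x'))) := rfl
  · -- ρ(h) × ρ(h') = ρ((h ↶ ρ(h')) ∙ h')
    calc timesS gamma (rhoS gamma idP m x) (rhoS gamma idP m x')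
        = Eop gamma m (timesS gamma x (rhoS gamma idP m x')) (rhoS gamma idP m x') :=
          T_rho gamma idP m H x _ hrz
      _ = Eop gamma m (timesS gamma x (rhoS gamma idP m x')) (Eop gamma m x' (Iser idP)) := rfl
      _ = Eop gamma m (gmul gamma m (timesS gamma x (rhoS gamma idP m x')) x') (Iser idP) :=
          E_mul gamma idP m H _ _ _
      _ = rhoS gamma idP m (gmul gamma m (timesS gamma x (rhoS gamma idP m x')) x') := rfl
  · -- ρ(h) = h ∙ λ(h) ∙ h⁻¹
    refine Eq.symm ?_
    calc conjS gamma m x (lamS gamma idP m x) xinv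
        = Fop gamma m (Eop gamma m x (Fop gamma m (Iser idP) x)) xinv :=
          conj_eq gamma idP m H _ _ _
      _ = Fop gamma m (Fop gamma m (Eop gamma m x (Iser idP)) x) xinv := by
          rw [← EF_comm gamma idP m H x (Iser idP) x]
      _ = Fop gamma m (Eop gamma m x (Iser idP)) (gmul gamma m x xinv) :=
          F_mul gamma idP m H _ _ _
      _ = Fop gamma m (Eop gamma m x (Iser idP)) 0 := by rw [hxinv.1]
      _ = Eop gamma m x (Iser idP) := Fop_zero gamma idP m H _
      _ = rhoS gamma idP m x := rfl
  · -- ρ(h) × λ(h') = (h')⁻¹ ↷ ρ(h' ∙ (h ↶ λ(h')))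
    have hu : gmul gamma m x'inv (gmul gamma m x' (timesS gamma x (lamS gamma idP m x')))
        = timesS gamma x (lamS gamma idP m x') := by
      rw [← gmul_assoc gamma idP m H, hx'inv.2, gmul_zero_left gamma idP m H]
    calc timesS gamma (rhoS gamma idP m x) (lamS gamma idP m x')
        = Eop gamma m (timesS gamma x (lamS gamma idP m x')) (lamS gamma idP m x') :=
          T_rho gamma idP m H x _ hlz
      _ = Eop gamma m (timesS gamma x (lamS gamma idP m x')) (Fop gamma m (Iser idP) x') := rfl
      _ = Fop gamma m (Eop gamma m (timesS gamma x (lamS gamma idP m x')) (Iser idP)) x' :=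
          (EF_comm gamma idP m H _ _ _).symm
      _ = Fop gamma m (Eop gamma m
            (gmul gamma m x'inv (gmul gamma m x' (timesS gamma x (lamS gamma idP m x'))))
            (Iser idP)) x' := by rw [hu]
      _ = Fop gamma m (Eop gamma m x'inv (Eop gamma m
            (gmul gamma m x' (timesS gamma x (lamS gamma idP m x'))) (Iser idP))) x' := by
          rw [E_mul gamma idP m H]
      _ = conjS gamma m x'inv
            (rhoS gamma idP m (gmul gamma m x' (timesS gamma x (lamS gamma idP m x')))) x' :=
          (conj_eq gamma idP m H _ _ _).symm
  · -- λ(h) × ρ(h') = h' ↷ λ((h ↶ ρ(h')) ∙ h')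
    have hv : gmul gamma m (gmul gamma m (timesS gamma x (rhoS gamma idP m x')) x') x'inv
        = timesS gamma x (rhoS gamma idP m x') := by
      rw [gmul_assoc gamma idP m H, hx'inv.1, gmul_zero_right gamma idP m H]
    calc timesS gamma (lamS gamma idP m x) (rhoS gamma idP m x')
        = Fop gamma m (rhoS gamma idP m x') (timesS gamma x (rhoS gamma idP m x')) :=
          T_lam gamma idP m H x _ hrz
      _ = Fop gamma m (Eop gamma m x' (Iser idP)) (timesS gamma x (rhoS gamma idP m x')) := rfl
      _ = Fop gamma m (Eop gamma m x' (Iser idP))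
            (gmul gamma m (gmul gamma m (timesS gamma x (rhoS gamma idP m x')) x') x'inv) := by
          rw [hv]
      _ = Fop gamma m (Fop gamma m (Eop gamma m x' (Iser idP))
            (gmul gamma m (timesS gamma x (rhoS gamma idP m x')) x')) x'inv :=
          (F_mul gamma idP m H _ _ _).symm
      _ = Fop gamma m (Eop gamma m x' (Fop gamma m (Iser idP)
            (gmul gamma m (timesS gamma x (rhoS gamma idP m x')) x'))) x'inv := by
          rw [EF_comm gamma idP m H]
      _ = conjS gamma m x'
            (lamS gamma idP m (gmul gamma m (timesS gamma x (rhoS gamma idP m x')) x')) x'inv :=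
          (conj_eq gamma idP m H _ _ _).symm
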